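/- FOOBAR guarantee with performance-difference coverage. Let πf be any policy, let f_h : S × A → ℝ for h ∈ {1,…,H}, and let πb be a deterministic policy that is greedy with respect to f, i.e. f_h(s, πb_h(s)) = max_a f_h(s,a) for every h and s. Let μ̄_h be probability vectors on S for h ∈ {1,…,H}, and let ε_b, ε_f, C ≥ 0. Write g_h(s) = max_a Q^{πb}_h(s,a) − Q^{πb}_h(s, πb_h(s)). Assume: (i) value-estimation error: for every h, ∑_s d^{πf}_h(s) · max_a (f_h(s,a) − Q^{πb}_h(s,a))² ≤ ε_b²; (ii) distribution matching: for every h, ∑_s (μ̄_h(s) − d^{πf}_h(s)) · g_h(s) ≤ ε_f; (iii) performance-difference coverage of a comparator policy πcomp: ∑_{h=1}^{H} ∑_s d^{πcomp}_h(s) · g_h(s) ≤ C · ∑_{h=1}^{H} ∑_s μ̄_h(s) · g_h(s). Then V^{πcomp} − V^{πb} ≤ C · H · (2·ε_b + ε_f). -/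
import Mathlib


open Finset

/-- Occupancy measure of a (non-stationary) policy in a finite-horizon MDP:
`docc P0 Ptr π h` is `d^π_h`, with `d^π_1 = P0` and
`d^π_{h+1}(s') = ∑_{s,a} d^π_h(s) π_h(a|s) P_h(s'|s,a)`.  The value at index `0` is a dummy. -/
noncomputable def docc {S A : Type*} [Fintype S] [Fintype A] (P0 : S → ℝ)
    (Ptr : ℕ → S → A → S → ℝ) (π : ℕ → S → A → ℝ) : ℕ → S → ℝ
  | 0 => P0
  | 1 => P0
  | h + 2 => fun s' =>
      ∑ s : S, ∑ a : A, docc P0 Ptr π (h + 1) s * π (h + 1) s a * Ptr (h + 1) s a s'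

/-- Backward value recursion: `Wval H Ptr R π k = V^π_{H+1-k}`, so `Wval H Ptr R π 0 = V^π_{H+1} = 0`. -/
noncomputable def Wval {S A : Type*} [Fintype S] [Fintype A] (H : ℕ)
    (Ptr : ℕ → S → A → S → ℝ) (R : ℕ → S → A → ℝ) (π : ℕ → S → A → ℝ) : ℕ → S → ℝ
  | 0 => fun _ => 0
  | k + 1 => fun s => ∑ a : A, π (H - k) s a *
      (R (H - k) s a + ∑ s' : S, Ptr (H - k) s a s' * Wval H Ptr R π k s')

/-- State value function `V^π_h`. -/
noncomputable def Vval {S A : Type*} [Fintype S] [Fintype A] (H : ℕ)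
    (Ptr : ℕ → S → A → S → ℝ) (R : ℕ → S → A → ℝ) (π : ℕ → S → A → ℝ) (h : ℕ) : S → ℝ :=
  Wval H Ptr R π (H + 1 - h)

/-- Action value function `Q^π_h(s,a) = R_h(s,a) + ∑_{s'} P_h(s'|s,a) V^π_{h+1}(s')`. -/
noncomputable def Qval {S A : Type*} [Fintype S] [Fintype A] (H : ℕ)
    (Ptr : ℕ → S → A → S → ℝ) (R : ℕ → S → A → ℝ) (π : ℕ → S → A → ℝ)
    (h : ℕ) (s : S) (a : A) : ℝ :=
  R h s a + ∑ s' : S, Ptr h s a s' * Vval H Ptr R π (h + 1) s'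

/-- Total value `V^π = ∑_s P0(s) V^π_1(s)`. -/
noncomputable def Vtot {S A : Type*} [Fintype S] [Fintype A] (H : ℕ) (P0 : S → ℝ)
    (Ptr : ℕ → S → A → S → ℝ) (R : ℕ → S → A → ℝ) (π : ℕ → S → A → ℝ) : ℝ :=
  ∑ s : S, P0 s * Vval H Ptr R π 1 s

/-- The stochastic policy (point mass) induced by a deterministic policy `d : ℕ → S → A`. -/
noncomputable def detPol {S A : Type*} [DecidableEq A] (d : ℕ → S → A) : ℕ → S → A → ℝ :=
  fun h s a => if a = d h s then 1 else 0

/-- Maximum of a real-valued function over the finite nonempty type `A`. -/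
noncomputable def maxA {A : Type*} [Fintype A] [Nonempty A] (g : A → ℝ) : ℝ :=
  Finset.univ.sup' Finset.univ_nonempty g

section Aux
variable {S A : Type*} [Fintype S] [Fintype A]

lemma docc_succ (P0 : S → ℝ) (Ptr : ℕ → S → A → S → ℝ) (π : ℕ → S → A → ℝ)
    (h : ℕ) (hh : 1 ≤ h) (s' : S) :
    docc P0 Ptr π (h + 1) s' =
      ∑ s : S, ∑ a : A, docc P0 Ptr π h s * π h s a * Ptr h s a s' := by
  obtain ⟨k, rfl⟩ : ∃ k, h = k + 1 := ⟨h - 1, by omega⟩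
  rfl

lemma docc_nonneg {H : ℕ} (P0 : S → ℝ) (hP0 : ∀ s, 0 ≤ P0 s)
    (Ptr : ℕ → S → A → S → ℝ) (π : ℕ → S → A → ℝ)
    (hPtr0 : ∀ h ∈ Finset.Icc 1 H, ∀ s a s', 0 ≤ Ptr h s a s')
    (hπ0 : ∀ h ∈ Finset.Icc 1 H, ∀ s a, 0 ≤ π h s a) :
    ∀ h, h ≤ H + 1 → ∀ s, 0 ≤ docc P0 Ptr π h s := by
  intro h
  induction h using Nat.strong_induction_on with
  | _ h ih =>
    match h with
    | 0 => intro _ s; exact hP0 s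
    | 1 => intro _ s; exact hP0 s
    | k + 2 =>
      intro hk s'
      have hmem : k + 1 ∈ Finset.Icc 1 H := by simp; omega
      rw [show k + 2 = (k+1) + 1 from rfl, docc_succ _ _ _ _ (by omega)]
      refine Finset.sum_nonneg fun s _ => Finset.sum_nonneg fun a _ => ?_
      have := ih (k+1) (by omega) (by omega) s
      have := hπ0 _ hmem s a
      have := hPtr0 _ hmem s a s'
      positivity

lemma docc_sum_one {H : ℕ} (P0 : S → ℝ) (hP0sum : ∑ s : S, P0 s = 1)
    (Ptr : ℕ → S → A → S → ℝ) (π : ℕ → S → A → ℝ)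
    (hPtr1 : ∀ h ∈ Finset.Icc 1 H, ∀ s a, ∑ s' : S, Ptr h s a s' = 1)
    (hπ1 : ∀ h ∈ Finset.Icc 1 H, ∀ s, ∑ a : A, π h s a = 1) :
    ∀ h, h ≤ H + 1 → ∑ s : S, docc P0 Ptr π h s = 1 := by
  intro h
  induction h using Nat.strong_induction_on with
  | _ h ih =>
    match h with
    | 0 => intro _; exact hP0sum
    | 1 => intro _; exact hP0sum
    | k + 2 =>
      intro hk
      have hmem : k + 1 ∈ Finset.Icc 1 H := by simp; omega
      calc ∑ s' : S, docc P0 Ptr π (k+2) s'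
          = ∑ s' : S, ∑ s : S, ∑ a : A,
              docc P0 Ptr π (k+1) s * π (k+1) s a * Ptr (k+1) s a s' := by
            refine Finset.sum_congr rfl fun s' _ => ?_
            rw [show k + 2 = (k+1) + 1 from rfl, docc_succ _ _ _ _ (by omega)]
        _ = ∑ s : S, ∑ a : A, docc P0 Ptr π (k+1) s * π (k+1) s a *
              (∑ s' : S, Ptr (k+1) s a s') := by
            rw [Finset.sum_comm]
            refine Finset.sum_congr rfl fun s _ => ?_
            rw [Finset.sum_comm]
            exact Finset.sum_congr rfl fun a _ => (Finset.mul_sum _ _ _).symm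
        _ = 1 := by
            simp_rw [hPtr1 _ hmem, mul_one, ← Finset.mul_sum, hπ1 _ hmem, mul_one]
            exact ih (k+1) (by omega) (by omega)

lemma Vval_top (H : ℕ) (Ptr : ℕ → S → A → S → ℝ) (R : ℕ → S → A → ℝ)
    (π : ℕ → S → A → ℝ) (s : S) : Vval H Ptr R π (H + 1) s = 0 := by
  unfold Vval
  rw [Nat.sub_self]
  rfl

lemma Vval_step (H h : ℕ) (hh : h ≤ H) (Ptr : ℕ → S → A → S → ℝ)
    (R : ℕ → S → A → ℝ) (π : ℕ → S → A → ℝ) (s : S) :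
    Vval H Ptr R π h s = ∑ a : A, π h s a * Qval H Ptr R π h s a := by
  have e1 : H + 1 - h = (H - h) + 1 := by omega
  have e2 : H - (H - h) = h := by omega
  have e3 : H + 1 - (h + 1) = H - h := by omega
  unfold Vval Qval
  rw [e1]
  show (∑ a : A, π (H - (H-h)) s a *
    (R (H - (H-h)) s a + ∑ s' : S, Ptr (H - (H-h)) s a s' * Wval H Ptr R π (H-h) s')) = _
  rw [e2]
  unfold Vval
  rw [e3]

end Aux
section PDL
variable {S A : Type*} [Fintype S] [Fintype A]

lemma detPol_sum {A' : Type*} [Fintype A'] [DecidableEq A'] (d : ℕ → S → A') (h : ℕ) (s : S)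
    (F : A' → ℝ) : ∑ a : A', detPol d h s a * F a = F (d h s) := by
  unfold detPol
  rw [Finset.sum_eq_single (d h s)]
  · simp
  · intro a _ ha; simp [ha]
  · simp

lemma Vval_det [DecidableEq A] (H h : ℕ) (hh : h ≤ H) (Ptr : ℕ → S → A → S → ℝ)
    (R : ℕ → S → A → ℝ) (πb : ℕ → S → A) (s : S) :
    Vval H Ptr R (detPol πb) h s = Qval H Ptr R (detPol πb) h s (πb h s) := by
  rw [Vval_step H h hh, detPol_sum]

/-- One step of the performance-difference expansion. -/
lemma pdl_step (H : ℕ) (P0 : S → ℝ) (Ptr : ℕ → S → A → S → ℝ) (R : ℕ → S → A → ℝ)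
    (π πb : ℕ → S → A → ℝ) (h : ℕ) (h1 : 1 ≤ h) (h2 : h ≤ H) :
    ∑ s : S, docc P0 Ptr π h s * (Vval H Ptr R π h s - Vval H Ptr R πb h s)
      = (∑ s : S, docc P0 Ptr π h s *
          ((∑ a : A, π h s a * Qval H Ptr R πb h s a) - Vval H Ptr R πb h s))
        + ∑ s' : S, docc P0 Ptr π (h + 1) s' *
            (Vval H Ptr R π (h + 1) s' - Vval H Ptr R πb (h + 1) s') := by
  have hQ : ∀ s a, Qval H Ptr R π h s a - Qval H Ptr R πb h s a
      = ∑ s' : S, Ptr h s a s' * (Vval H Ptr R π (h+1) s' - Vval H Ptr R πb (h+1) s') := by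
    intro s a
    unfold Qval
    simp_rw [mul_sub]
    rw [Finset.sum_sub_distrib]
    ring
  have key : ∑ s' : S, docc P0 Ptr π (h + 1) s' *
        (Vval H Ptr R π (h + 1) s' - Vval H Ptr R πb (h + 1) s')
      = ∑ s : S, docc P0 Ptr π h s *
          ∑ a : A, π h s a * (Qval H Ptr R π h s a - Qval H Ptr R πb h s a) := by
    simp_rw [docc_succ P0 Ptr π h h1, hQ, Finset.sum_mul, Finset.mul_sum]
    rw [Finset.sum_comm]
    refine Finset.sum_congr rfl fun s _ => ?_
    rw [Finset.sum_comm]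
    refine Finset.sum_congr rfl fun a _ => ?_
    exact Finset.sum_congr rfl fun s' _ => by ring
  rw [key, ← Finset.sum_add_distrib]
  refine Finset.sum_congr rfl fun s _ => ?_
  rw [Vval_step H h h2 Ptr R π s]
  rw [← mul_add]
  congr 1
  simp_rw [mul_sub]
  rw [Finset.sum_sub_distrib]
  ring

/-- Telescoped PDL. -/
lemma pdl (H : ℕ) (P0 : S → ℝ) (Ptr : ℕ → S → A → S → ℝ) (R : ℕ → S → A → ℝ)
    (π πb : ℕ → S → A → ℝ) :
    Vtot H P0 Ptr R π - Vtot H P0 Ptr R πb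
      = ∑ h ∈ Finset.Icc 1 H, ∑ s : S, docc P0 Ptr π h s *
          ((∑ a : A, π h s a * Qval H Ptr R πb h s a) - Vval H Ptr R πb h s) := by
  have main : ∀ n, n ≤ H →
      ∑ s : S, docc P0 Ptr π 1 s * (Vval H Ptr R π 1 s - Vval H Ptr R πb 1 s)
        = (∑ h ∈ Finset.Icc 1 n, ∑ s : S, docc P0 Ptr π h s *
            ((∑ a : A, π h s a * Qval H Ptr R πb h s a) - Vval H Ptr R πb h s))
          + ∑ s : S, docc P0 Ptr π (n+1) s *
              (Vval H Ptr R π (n+1) s - Vval H Ptr R πb (n+1) s) := by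
    intro n
    induction n with
    | zero => intro _; simp
    | succ m ih =>
      intro hm
      rw [ih (by omega), Finset.sum_Icc_succ_top (by omega : 1 ≤ m + 1),
        pdl_step H P0 Ptr R π πb (m+1) (by omega) hm]
      ring
  have := main H le_rfl
  simp only [Vval_top, sub_self, mul_zero, Finset.sum_const_zero, add_zero] at this
  have d1 : docc P0 Ptr π 1 = P0 := rfl
  rw [d1] at this
  unfold Vtot
  rw [← Finset.sum_sub_distrib]
  simp_rw [← mul_sub]
  exact this

end PDL
section Bounds
variable {S A : Type*} [Fintype S] [Fintype A] [Nonempty A]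

lemma le_maxA (F : A → ℝ) (a : A) : F a ≤ maxA F :=
  Finset.le_sup' F (Finset.mem_univ a)

lemma exists_maxA (F : A → ℝ) : ∃ a : A, maxA F = F a := by
  obtain ⟨a, _, ha⟩ := Finset.exists_mem_eq_sup' Finset.univ_nonempty F
  exact ⟨a, ha⟩

lemma le_sqrt_of_sq_le {x M : ℝ} (h : x ^ 2 ≤ M) : x ≤ Real.sqrt M := by
  have hM : 0 ≤ M := le_trans (sq_nonneg x) h
  nlinarith [Real.sq_sqrt hM, Real.sqrt_nonneg M]

/-- Pointwise bound: greedy gap is at most twice the sqrt of the max squared error. -/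
lemma gap_le (Q f : A → ℝ) (ab : A) (hgreedy : f ab = maxA f) :
    maxA Q - Q ab ≤ 2 * Real.sqrt (maxA (fun a => (f a - Q a) ^ 2)) := by
  obtain ⟨astar, hstar⟩ := exists_maxA Q
  have hbound : ∀ a : A, (f a - Q a) ^ 2 ≤ maxA (fun a => (f a - Q a) ^ 2) :=
    fun a => le_maxA (fun a => (f a - Q a) ^ 2) a
  set M := maxA (fun a => (f a - Q a) ^ 2) with hM
  have h1 : Q astar - f astar ≤ Real.sqrt M :=
    le_sqrt_of_sq_le (by nlinarith [hbound astar])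
  have h2 : f ab - Q ab ≤ Real.sqrt M := le_sqrt_of_sq_le (hbound ab)
  have h3 : f astar ≤ f ab := hgreedy ▸ le_maxA f astar
  rw [hstar]
  linarith

/-- Cauchy–Schwarz style bound: expectation of sqrt is at most sqrt of expectation. -/
lemma sum_sqrt_le {d M : S → ℝ} {εb : ℝ} (hd0 : ∀ s, 0 ≤ d s) (hd1 : ∑ s : S, d s = 1)
    (hM0 : ∀ s, 0 ≤ M s) (hsum : ∑ s : S, d s * M s ≤ εb ^ 2) (hεb : 0 ≤ εb) :
    ∑ s : S, d s * Real.sqrt (M s) ≤ εb := by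
  have hcs := Finset.sum_sq_le_sum_mul_sum_of_sq_eq_mul (Finset.univ : Finset S)
    (r := fun s => d s * Real.sqrt (M s)) (f := fun s => d s) (g := fun s => d s * M s)
    (fun s _ => hd0 s) (fun s _ => mul_nonneg (hd0 s) (hM0 s))
    (fun s _ => by
      have : Real.sqrt (M s) ^ 2 = M s := Real.sq_sqrt (hM0 s)
      ring_nf
      nlinarith [this])
  rw [hd1, one_mul] at hcs
  have h2 : (∑ s : S, d s * Real.sqrt (M s)) ^ 2 ≤ εb ^ 2 := hcs.trans hsum
  have hnn : 0 ≤ ∑ s : S, d s * Real.sqrt (M s) :=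
    Finset.sum_nonneg fun s _ => mul_nonneg (hd0 s) (Real.sqrt_nonneg _)
  nlinarith

end Bounds
/-- FOOBAR guarantee with performance-difference coverage: with `g_h(s) = max_a Q^{πb}_h(s,a)
− Q^{πb}_h(s,πb_h(s))`, if `πb` is greedy with respect to `f`, the value-estimation error under
the forward occupancy is at most `εb²`, the offline distributions match the forward occupancy
up to `εf` against `g`, and the comparator satisfies the performance-difference coverage
`∑_h E_{d^{πcomp}_h}[g_h] ≤ C · ∑_h E_{μ̄_h}[g_h]`, then `V^{πcomp} − V^{πb} ≤ C·H·(2εb + εf)`. -/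
theorem foobar_performance_difference_coverage
    {S A : Type*} [Fintype S] [Fintype A] [Nonempty S] [Nonempty A] [DecidableEq A]
    (H : ℕ) (hH : 1 ≤ H)
    (P0 : S → ℝ) (hP0 : ∀ s, 0 ≤ P0 s) (hP0sum : ∑ s : S, P0 s = 1)
    (Ptr : ℕ → S → A → S → ℝ)
    (hPtr0 : ∀ h ∈ Finset.Icc 1 H, ∀ s a s', 0 ≤ Ptr h s a s')
    (hPtr1 : ∀ h ∈ Finset.Icc 1 H, ∀ s a, ∑ s' : S, Ptr h s a s' = 1)
    (R : ℕ → S → A → ℝ) (hR : ∀ h ∈ Finset.Icc 1 H, ∀ s a, R h s a ∈ Set.Icc (0 : ℝ) 1)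
    -- the forward policy `πf` and comparator policy `πcomp`
    (πf πcomp : ℕ → S → A → ℝ)
    (hπf0 : ∀ h ∈ Finset.Icc 1 H, ∀ s a, 0 ≤ πf h s a)
    (hπf1 : ∀ h ∈ Finset.Icc 1 H, ∀ s, ∑ a : A, πf h s a = 1)
    (hπc0 : ∀ h ∈ Finset.Icc 1 H, ∀ s a, 0 ≤ πcomp h s a)
    (hπc1 : ∀ h ∈ Finset.Icc 1 H, ∀ s, ∑ a : A, πcomp h s a = 1)
    -- estimated value functions and the greedy deterministic backward policy
    (f : ℕ → S → A → ℝ) (πb : ℕ → S → A)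
    (hgreedy : ∀ h ∈ Finset.Icc 1 H, ∀ s, f h s (πb h s) = maxA (fun a => f h s a))
    -- offline state distributions
    (μ : ℕ → S → ℝ)
    (hμ0 : ∀ h ∈ Finset.Icc 1 H, ∀ s, 0 ≤ μ h s)
    (hμ1 : ∀ h ∈ Finset.Icc 1 H, ∑ s : S, μ h s = 1)
    (εb εf C : ℝ) (hεb : 0 ≤ εb) (hεf : 0 ≤ εf) (hC : 0 ≤ C)
    -- the greedy-gap functions `g_h`
    (g : ℕ → S → ℝ)
    (hg : ∀ h ∈ Finset.Icc 1 H, ∀ s, g h s =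
      maxA (fun a => Qval H Ptr R (detPol πb) h s a) - Qval H Ptr R (detPol πb) h s (πb h s))
    -- (i) value-estimation error
    (hval : ∀ h ∈ Finset.Icc 1 H,
      ∑ s : S, docc P0 Ptr πf h s *
        maxA (fun a => (f h s a - Qval H Ptr R (detPol πb) h s a) ^ 2) ≤ εb ^ 2)
    -- (ii) distribution matching
    (hmatch : ∀ h ∈ Finset.Icc 1 H,
      ∑ s : S, (μ h s - docc P0 Ptr πf h s) * g h s ≤ εf)
    -- (iii) performance-difference coverage of the comparator policy
    (hcov : ∑ h ∈ Finset.Icc 1 H, ∑ s : S, docc P0 Ptr πcomp h s * g h s ≤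
      C * ∑ h ∈ Finset.Icc 1 H, ∑ s : S, μ h s * g h s) :
    Vtot H P0 Ptr R πcomp - Vtot H P0 Ptr R (detPol πb) ≤ C * H * (2 * εb + εf) := by
  classical
  set πb' := detPol πb with hπb'
  -- Step 1: performance-difference lemma
  have hpdl := pdl H P0 Ptr R πcomp πb'
  -- Step 2: bound each PDL term by the greedy gap
  have hstep2 : ∀ h ∈ Finset.Icc 1 H,
      ∑ s : S, docc P0 Ptr πcomp h s *
        ((∑ a : A, πcomp h s a * Qval H Ptr R πb' h s a) - Vval H Ptr R πb' h s)
      ≤ ∑ s : S, docc P0 Ptr πcomp h s * g h s := by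
    intro h hh
    simp only [Finset.mem_Icc] at hh
    refine Finset.sum_le_sum fun s _ => ?_
    have hd0 : 0 ≤ docc P0 Ptr πcomp h s :=
      docc_nonneg P0 hP0 Ptr πcomp hPtr0 hπc0 h (by omega) s
    refine mul_le_mul_of_nonneg_left ?_ hd0
    rw [hg h (by simp [Finset.mem_Icc]; omega) s,
      Vval_det H h hh.2 Ptr R πb s]
    have hub : (∑ a : A, πcomp h s a * Qval H Ptr R πb' h s a)
        ≤ maxA (fun a => Qval H Ptr R πb' h s a) := by
      calc ∑ a : A, πcomp h s a * Qval H Ptr R πb' h s a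
          ≤ ∑ a : A, πcomp h s a * maxA (fun a => Qval H Ptr R πb' h s a) :=
            Finset.sum_le_sum fun a _ =>
              mul_le_mul_of_nonneg_left (le_maxA _ a)
                (hπc0 h (by simp [Finset.mem_Icc]; omega) s a)
        _ = maxA (fun a => Qval H Ptr R πb' h s a) := by
            rw [← Finset.sum_mul, hπc1 h (by simp [Finset.mem_Icc]; omega) s, one_mul]
    linarith
  -- Step 5: forward occupancy bound per step
  have hstep5 : ∀ h ∈ Finset.Icc 1 H,
      ∑ s : S, docc P0 Ptr πf h s * g h s ≤ 2 * εb := by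
    intro h hh
    simp only [Finset.mem_Icc] at hh
    have hd0 : ∀ s, 0 ≤ docc P0 Ptr πf h s :=
      fun s => docc_nonneg P0 hP0 Ptr πf hPtr0 hπf0 h (by omega) s
    have hM0 : ∀ s, 0 ≤ maxA (fun a => (f h s a - Qval H Ptr R πb' h s a) ^ 2) := by
      intro s
      exact le_trans (sq_nonneg _)
        (le_maxA (fun a => (f h s a - Qval H Ptr R πb' h s a) ^ 2) (Classical.arbitrary A))
    have hgs : ∀ s, g h s ≤
        2 * Real.sqrt (maxA (fun a => (f h s a - Qval H Ptr R πb' h s a) ^ 2)) := by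
      intro s
      rw [hg h (by simp [Finset.mem_Icc]; omega) s]
      exact gap_le (fun a => Qval H Ptr R πb' h s a) (fun a => f h s a) (πb h s)
        (hgreedy h (by simp [Finset.mem_Icc]; omega) s)
    calc ∑ s : S, docc P0 Ptr πf h s * g h s
        ≤ ∑ s : S, docc P0 Ptr πf h s *
            (2 * Real.sqrt (maxA (fun a => (f h s a - Qval H Ptr R πb' h s a) ^ 2))) :=
          Finset.sum_le_sum fun s _ => mul_le_mul_of_nonneg_left (hgs s) (hd0 s)
      _ = 2 * ∑ s : S, docc P0 Ptr πf h s *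
            Real.sqrt (maxA (fun a => (f h s a - Qval H Ptr R πb' h s a) ^ 2)) := by
          rw [Finset.mul_sum]; exact Finset.sum_congr rfl fun s _ => by ring
      _ ≤ 2 * εb := by
          have := sum_sqrt_le (S := S) hd0
            (docc_sum_one P0 hP0sum Ptr πf hPtr1 hπf1 h (by omega)) hM0
            (hval h (by simp [Finset.mem_Icc]; omega)) hεb
          linarith
  -- Step 4: distribution matching per step
  have hstep4 : ∀ h ∈ Finset.Icc 1 H,
      ∑ s : S, μ h s * g h s ≤ 2 * εb + εf := by
    intro h hh
    have := hmatch h hh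
    simp_rw [sub_mul] at this
    rw [Finset.sum_sub_distrib] at this
    have := hstep5 h hh
    linarith
  -- Combine
  have hμsum : ∑ h ∈ Finset.Icc 1 H, ∑ s : S, μ h s * g h s ≤ H * (2 * εb + εf) := by
    calc ∑ h ∈ Finset.Icc 1 H, ∑ s : S, μ h s * g h s
        ≤ ∑ h ∈ Finset.Icc 1 H, (2 * εb + εf) := Finset.sum_le_sum hstep4
      _ = H * (2 * εb + εf) := by
          rw [Finset.sum_const, Nat.card_Icc]
          push_cast
          ring
  calc Vtot H P0 Ptr R πcomp - Vtot H P0 Ptr R πb'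
      = ∑ h ∈ Finset.Icc 1 H, ∑ s : S, docc P0 Ptr πcomp h s *
          ((∑ a : A, πcomp h s a * Qval H Ptr R πb' h s a) - Vval H Ptr R πb' h s) := hpdl
    _ ≤ ∑ h ∈ Finset.Icc 1 H, ∑ s : S, docc P0 Ptr πcomp h s * g h s :=
        Finset.sum_le_sum hstep2
    _ ≤ C * ∑ h ∈ Finset.Icc 1 H, ∑ s : S, μ h s * g h s := hcov
    _ ≤ C * (H * (2 * εb + εf)) := mul_le_mul_of_nonneg_left hμsum hC
    _ = C * H * (2 * εb + εf) := by ring
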